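/- arXiv:2309.06985 — 4 statements merged into one kernel-verified Lean document; each statement's English description precedes it below -/
import Mathlib

section
/- The compositional precision matrix Ω_c = Ω₀ − Ω₀ 1_p 1_pᵀ Ω₀ / (1_pᵀ Ω₀ 1_p) is the Moore–Penrose pseudoinverse of the centered log-ratio covariance matrix Σ_c = G Σ₀ G; that is, Σ_c Ω_c Σ_c = Σ_c, Ω_c Σ_c Ω_c = Ω_c, and both products Σ_c Ω_c and Ω_c Σ_c are symmetric matrices. -/
/-!
`Ω_c` annihilates `1_p` from both sides, so `G Ω_c = Ω_c = Ω_c G`, while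
`Σ₀ Ω_c = I − 1_p 1_pᵀ Ω₀ / (1_pᵀ Ω₀ 1_p)` differs from `I` by a matrix whose columns are
multiples of `1_p ∈ ker G`. Hence `Σ_c Ω_c = G Σ₀ Ω_c = G` and symmetrically `Ω_c Σ_c = G`;
as `G` is a symmetric idempotent fixing `Σ_c` and `Ω_c`, the four Penrose equations follow.
-/

open Matrix

noncomputable section

/-- The all-ones vector in `ℝ^p`. -/
def onesV (p : ℕ) : Fin p → ℝ := fun _ => 1

/-- The centering matrix `G = I_p − p⁻¹ 1_p 1_pᵀ`. -/
def Gmat (p : ℕ) : Matrix (Fin p) (Fin p) ℝ :=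
  1 - (p : ℝ)⁻¹ • Matrix.vecMulVec (onesV p) (onesV p)

/-- The compositional precision matrix `Ω_c = Ω₀ − Ω₀ 1_p 1_pᵀ Ω₀ / (1_pᵀ Ω₀ 1_p)`. -/
def OmegaC {p : ℕ} (Ω : Matrix (Fin p) (Fin p) ℝ) : Matrix (Fin p) (Fin p) ℝ :=
  Ω - (onesV p ⬝ᵥ Ω.mulVec (onesV p))⁻¹ •
    Matrix.vecMulVec (Ω.mulVec (onesV p)) (Matrix.vecMul (onesV p) Ω)

/-- The centered log-ratio covariance matrix `Σ_c = G Σ₀ G` with `Σ₀ = Ω₀⁻¹`. -/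
def SigmaC {p : ℕ} (Ω : Matrix (Fin p) (Fin p) ℝ) : Matrix (Fin p) (Fin p) ℝ :=
  Gmat p * Ω⁻¹ * Gmat p

namespace Matrix

def IsMoorePenroseInverse {m n α : Type*} [Fintype m] [Fintype n] [Mul α] [AddCommMonoid α]
    (A : Matrix m n α) (B : Matrix n m α) : Prop :=
  A * B * A = A ∧ B * A * B = B ∧ (A * B)ᵀ = A * B ∧ (B * A)ᵀ = B * A

theorem isMoorePenroseInverse_of_mul_eq {m n α : Type*} [Fintype m] [Fintype n] [Mul α]
    [AddCommMonoid α] {A : Matrix m n α} {B : Matrix n m α} {P : Matrix m m α}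
    {Q : Matrix n n α} (hAB : A * B = P) (hBA : B * A = Q) (hPA : P * A = A) (hQB : Q * B = B)
    (hP : Pᵀ = P) (hQ : Qᵀ = Q) : IsMoorePenroseInverse A B := by
  rw [IsMoorePenroseInverse, hAB, hBA]
  exact ⟨hPA, hQB, hP, hQ⟩

end Matrix

section RankOneDeflation

variable {n 𝕜 : Type*} [Fintype n] [Field 𝕜]

def rankOneDeflation (Ω : Matrix n n 𝕜) (u : n → 𝕜) : Matrix n n 𝕜 :=
  Ω - (u ⬝ᵥ Ω *ᵥ u)⁻¹ • vecMulVec (Ω *ᵥ u) (u ᵥ* Ω)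

variable {Ω G : Matrix n n 𝕜} {u : n → 𝕜}

theorem rankOneDeflation_mulVec (hs : u ⬝ᵥ Ω *ᵥ u ≠ 0) : rankOneDeflation Ω u *ᵥ u = 0 := by
  rw [rankOneDeflation, sub_mulVec, smul_mulVec, vecMulVec_mulVec, op_smul_eq_smul,
    ← dotProduct_mulVec, smul_smul, inv_mul_cancel₀ hs, one_smul, sub_self]

theorem vecMul_rankOneDeflation (hs : u ⬝ᵥ Ω *ᵥ u ≠ 0) : u ᵥ* rankOneDeflation Ω u = 0 := by
  rw [rankOneDeflation, vecMul_sub, vecMul_smul, vecMul_vecMulVec, smul_smul,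
    inv_mul_cancel₀ hs, one_smul, sub_self]

theorem inv_mul_rankOneDeflation [DecidableEq n] (hΩ : IsUnit Ω.det) :
    Ω⁻¹ * rankOneDeflation Ω u = 1 - (u ⬝ᵥ Ω *ᵥ u)⁻¹ • vecMulVec u (u ᵥ* Ω) := by
  rw [rankOneDeflation, mul_sub, Matrix.mul_smul, mul_vecMulVec, mulVec_mulVec,
    nonsing_inv_mul _ hΩ, one_mulVec]

theorem rankOneDeflation_mul_inv [DecidableEq n] (hΩ : IsUnit Ω.det) :
    rankOneDeflation Ω u * Ω⁻¹ = 1 - (u ⬝ᵥ Ω *ᵥ u)⁻¹ • vecMulVec (Ω *ᵥ u) u := by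
  rw [rankOneDeflation, sub_mul, smul_mul, vecMulVec_mul, vecMul_vecMul, mul_nonsing_inv _ hΩ,
    vecMul_one]

theorem mul_inv_mul_rankOneDeflation [DecidableEq n] (hΩ : IsUnit Ω.det) (hG : G *ᵥ u = 0) :
    G * Ω⁻¹ * rankOneDeflation Ω u = G := by
  rw [mul_assoc, inv_mul_rankOneDeflation hΩ, mul_sub, mul_one, Matrix.mul_smul, mul_vecMulVec,
    hG, zero_vecMulVec, smul_zero, sub_zero]

theorem rankOneDeflation_mul_inv_mul [DecidableEq n] (hΩ : IsUnit Ω.det) (hG : u ᵥ* G = 0) :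
    rankOneDeflation Ω u * Ω⁻¹ * G = G := by
  rw [rankOneDeflation_mul_inv hΩ, sub_mul, one_mul, smul_mul, vecMulVec_mul, hG,
    vecMulVec_zero, smul_zero, sub_zero]

end RankOneDeflation

section Centering

variable {p : ℕ}

theorem onesV_ne_zero (hp : p ≠ 0) : onesV p ≠ 0 := fun h =>
  one_ne_zero (congrFun h ⟨0, Nat.pos_of_ne_zero hp⟩)

theorem onesV_dotProduct_onesV (p : ℕ) : onesV p ⬝ᵥ onesV p = p := by
  simp [dotProduct, onesV]

theorem Gmat_transpose (p : ℕ) : (Gmat p)ᵀ = Gmat p := by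
  rw [Gmat, transpose_sub, transpose_one, transpose_smul, transpose_vecMulVec]

theorem Gmat_mulVec_onesV (hp : p ≠ 0) : Gmat p *ᵥ onesV p = 0 := by
  rw [Gmat, sub_mulVec, one_mulVec, smul_mulVec, vecMulVec_mulVec, op_smul_eq_smul,
    onesV_dotProduct_onesV, smul_smul, inv_mul_cancel₀ (Nat.cast_ne_zero.mpr hp), one_smul,
    sub_self]

theorem onesV_vecMul_Gmat (hp : p ≠ 0) : onesV p ᵥ* Gmat p = 0 := by
  rw [← mulVec_transpose, Gmat_transpose, Gmat_mulVec_onesV hp]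

theorem Gmat_mul_of_vecMul_eq_zero {M : Matrix (Fin p) (Fin p) ℝ} (hM : onesV p ᵥ* M = 0) :
    Gmat p * M = M := by
  rw [Gmat, sub_mul, one_mul, smul_mul, vecMulVec_mul, hM, vecMulVec_zero, smul_zero, sub_zero]

theorem mul_Gmat_of_mulVec_eq_zero {M : Matrix (Fin p) (Fin p) ℝ} (hM : M *ᵥ onesV p = 0) :
    M * Gmat p = M := by
  rw [Gmat, mul_sub, mul_one, Matrix.mul_smul, mul_vecMulVec, hM, zero_vecMulVec, smul_zero,
    sub_zero]

theorem Gmat_mul_self (hp : p ≠ 0) : Gmat p * Gmat p = Gmat p :=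
  Gmat_mul_of_vecMul_eq_zero (onesV_vecMul_Gmat hp)

end Centering

/-- `Ω_c` is the Moore–Penrose pseudoinverse of `Σ_c`. -/
theorem omegaC_is_moore_penrose_of_sigmaC (p : ℕ) (hp : 2 ≤ p)
    (Ω₀ : Matrix (Fin p) (Fin p) ℝ) (hΩ₀ : Ω₀.PosDef) :
    SigmaC Ω₀ * OmegaC Ω₀ * SigmaC Ω₀ = SigmaC Ω₀ ∧
    OmegaC Ω₀ * SigmaC Ω₀ * OmegaC Ω₀ = OmegaC Ω₀ ∧
    (SigmaC Ω₀ * OmegaC Ω₀)ᵀ = SigmaC Ω₀ * OmegaC Ω₀ ∧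
    (OmegaC Ω₀ * SigmaC Ω₀)ᵀ = OmegaC Ω₀ * SigmaC Ω₀ := by
  have hp0 : p ≠ 0 := by omega
  have hdet : IsUnit Ω₀.det := (isUnit_iff_isUnit_det Ω₀).mp hΩ₀.isUnit
  have hs : onesV p ⬝ᵥ Ω₀ *ᵥ onesV p ≠ 0 := by
    simpa using (hΩ₀.dotProduct_mulVec_pos (onesV_ne_zero hp0)).ne'
  -- `OmegaC Ω₀` unfolds to `rankOneDeflation Ω₀ (onesV p)`.
  have hGΩ : Gmat p * OmegaC Ω₀ = OmegaC Ω₀ :=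
    Gmat_mul_of_vecMul_eq_zero (vecMul_rankOneDeflation hs)
  have hΩG : OmegaC Ω₀ * Gmat p = OmegaC Ω₀ :=
    mul_Gmat_of_mulVec_eq_zero (rankOneDeflation_mulVec hs)
  refine isMoorePenroseInverse_of_mul_eq (P := Gmat p) (Q := Gmat p) ?_ ?_ ?_ hGΩ
    (Gmat_transpose p) (Gmat_transpose p)
  · rw [SigmaC, mul_assoc, hGΩ]
    exact mul_inv_mul_rankOneDeflation hdet (Gmat_mulVec_onesV hp0)
  · rw [SigmaC, ← mul_assoc, ← mul_assoc, hΩG]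
    exact rankOneDeflation_mul_inv_mul hdet (onesV_vecMul_Gmat hp0)
  · rw [SigmaC, ← mul_assoc, ← mul_assoc, Gmat_mul_self hp0]

end
end

section
/- The compositional precision matrix Ω_c is positive semidefinite, and every nonzero eigenvalue of Ω_c lies between the extreme eigenvalues of Ω₀: if Ω_c x = μ x for some x ≠ 0 and μ ≠ 0, then λ_min(Ω₀) ≤ μ ≤ λ_max(Ω₀). -/
/-!
Write `r x = x - (vᵀ Ω x / vᵀ Ω v) • v` for the `Ω`-orthogonal residual of `x` against `v`
(here `v = 1_p`). Then `Ω_c x = Ω (r x)`, so `xᵀ Ω_c x = (r x)ᵀ Ω (r x) ≥ 0` and `vᵀ Ω_c x = 0`.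
For an eigenvector `x` with eigenvalue `μ ≠ 0` the latter forces `v ⊥ x`, hence `‖r x‖ ≥ ‖x‖` and
`μ ‖x‖² = (r x)ᵀ Ω (r x) ≥ λ_min ‖r x‖² ≥ λ_min ‖x‖²`. On the other side
`xᵀ Ω_c x = xᵀ Ω x - (vᵀ Ω x)² / vᵀ Ω v ≤ λ_max ‖x‖²`. The Rayleigh bounds come from
`A - c • 1 = U diag(λ - c) Uᵀ` being positive semidefinite when `c ≤ λ`.
-/

open Matrix

noncomputable section

/-- The entrywise `ℓ∞`-norm `‖A‖_max = max_{i,j} |a_ij|`. -/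
def maxNorm {p : ℕ} (A : Matrix (Fin p) (Fin p) ℝ) : ℝ := ⨆ i, ⨆ j, |A i j|

/-- The matrix `ℓ1`-norm `‖A‖_{L1} = max_j Σ_i |a_ij|`. -/
def l1Norm {p : ℕ} (A : Matrix (Fin p) (Fin p) ℝ) : ℝ := ⨆ j, ∑ i, |A i j|

/-- The smallest eigenvalue of a Hermitian real matrix. -/
def lamMin {p : ℕ} {A : Matrix (Fin p) (Fin p) ℝ} (hA : A.IsHermitian) : ℝ :=
  ⨅ i, hA.eigenvalues i

/-- The largest eigenvalue of a Hermitian real matrix. -/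
def lamMax {p : ℕ} {A : Matrix (Fin p) (Fin p) ℝ} (hA : A.IsHermitian) : ℝ :=
  ⨆ i, hA.eigenvalues i

namespace Matrix.IsHermitian

variable {n : Type*} [Fintype n] {A : Matrix n n ℝ}

lemma vecMul_eq_mulVec (hA : A.IsHermitian) (v : n → ℝ) : v ᵥ* A = A *ᵥ v := by
  rw [← mulVec_transpose, ← conjTranspose_eq_transpose_of_trivial, hA.eq]

variable [DecidableEq n] (hA : A.IsHermitian)

lemma sub_smul_one_eq (c : ℝ) :
    A - c • 1 = (hA.eigenvectorUnitary : Matrix n n ℝ) *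
      diagonal (fun i => hA.eigenvalues i - c) * star (hA.eigenvectorUnitary : Matrix n n ℝ) := by
  have hU : (hA.eigenvectorUnitary : Matrix n n ℝ) * star (hA.eigenvectorUnitary : Matrix n n ℝ) =
      1 := Unitary.mul_star_self_of_mem hA.eigenvectorUnitary.2
  have hD : diagonal (fun i => hA.eigenvalues i - c) =
      diagonal (RCLike.ofReal ∘ hA.eigenvalues) - c • 1 := by
    rw [smul_one_eq_diagonal, diagonal_sub]; rfl
  conv_lhs => rw [hA.spectral_theorem, Unitary.conjStarAlgAut_apply]
  rw [hD, mul_sub, sub_mul, mul_smul_comm, mul_one, smul_mul_assoc, hU]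

lemma posSemidef_sub_smul_one {c : ℝ} (hc : ∀ i, c ≤ hA.eigenvalues i) :
    (A - c • 1).PosSemidef := by
  rw [hA.sub_smul_one_eq c, star_eq_conjTranspose]
  exact (PosSemidef.diagonal fun i => sub_nonneg.2 (hc i)).mul_mul_conjTranspose_same _

lemma posSemidef_smul_one_sub {c : ℝ} (hc : ∀ i, hA.eigenvalues i ≤ c) :
    (c • 1 - A).PosSemidef := by
  rw [← neg_sub, hA.sub_smul_one_eq c, star_eq_conjTranspose, ← neg_mul, ← mul_neg, diagonal_neg]
  exact (PosSemidef.diagonal fun i => by simpa using hc i).mul_mul_conjTranspose_same _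

lemma mul_dotProduct_self_le {c : ℝ} (hc : ∀ i, c ≤ hA.eigenvalues i) (x : n → ℝ) :
    c * (x ⬝ᵥ x) ≤ x ⬝ᵥ A *ᵥ x := by
  have := (hA.posSemidef_sub_smul_one hc).dotProduct_mulVec_nonneg x
  simpa [sub_mulVec, smul_mulVec, dotProduct_sub] using this

lemma dotProduct_mulVec_le {c : ℝ} (hc : ∀ i, hA.eigenvalues i ≤ c) (x : n → ℝ) :
    x ⬝ᵥ A *ᵥ x ≤ c * (x ⬝ᵥ x) := by
  have := (hA.posSemidef_smul_one_sub hc).dotProduct_mulVec_nonneg x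
  simpa [sub_mulVec, smul_mulVec, dotProduct_sub] using this

end Matrix.IsHermitian

namespace Matrix

variable {n : Type*} [Fintype n] (Ω : Matrix n n ℝ) (v : n → ℝ)

def rankOneDowndate : Matrix n n ℝ :=
  Ω - (v ⬝ᵥ Ω *ᵥ v)⁻¹ • vecMulVec (Ω *ᵥ v) (v ᵥ* Ω)

def orthResidual (x : n → ℝ) : n → ℝ :=
  x - ((v ⬝ᵥ Ω *ᵥ x) / (v ⬝ᵥ Ω *ᵥ v)) • v

variable {Ω v}

lemma rankOneDowndate_mulVec (x : n → ℝ) :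
    rankOneDowndate Ω v *ᵥ x = Ω *ᵥ orthResidual Ω v x := by
  rw [rankOneDowndate, orthResidual, sub_mulVec, smul_mulVec, vecMulVec_mulVec, mulVec_sub,
    mulVec_smul, ← dotProduct_mulVec, op_smul_eq_smul, smul_smul, inv_mul_eq_div]

lemma dotProduct_mulVec_orthResidual (hs : v ⬝ᵥ Ω *ᵥ v ≠ 0) (x : n → ℝ) :
    v ⬝ᵥ Ω *ᵥ orthResidual Ω v x = 0 := by
  rw [orthResidual, mulVec_sub, mulVec_smul, dotProduct_sub, dotProduct_smul, smul_eq_mul,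
    div_mul_cancel₀ _ hs, sub_self]

lemma dotProduct_rankOneDowndate_mulVec (hs : v ⬝ᵥ Ω *ᵥ v ≠ 0) (x : n → ℝ) :
    v ⬝ᵥ rankOneDowndate Ω v *ᵥ x = 0 := by
  rw [rankOneDowndate_mulVec, dotProduct_mulVec_orthResidual hs]

lemma dotProduct_rankOneDowndate_mulVec_self (hs : v ⬝ᵥ Ω *ᵥ v ≠ 0) (x : n → ℝ) :
    x ⬝ᵥ rankOneDowndate Ω v *ᵥ x = orthResidual Ω v x ⬝ᵥ Ω *ᵥ orthResidual Ω v x := by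
  calc x ⬝ᵥ rankOneDowndate Ω v *ᵥ x
      = (orthResidual Ω v x + ((v ⬝ᵥ Ω *ᵥ x) / (v ⬝ᵥ Ω *ᵥ v)) • v) ⬝ᵥ Ω *ᵥ orthResidual Ω v x := by
        rw [rankOneDowndate_mulVec, orthResidual, sub_add_cancel]
    _ = orthResidual Ω v x ⬝ᵥ Ω *ᵥ orthResidual Ω v x := by
        rw [add_dotProduct, smul_dotProduct, dotProduct_mulVec_orthResidual hs, smul_zero, add_zero]

lemma isHermitian_rankOneDowndate (hΩ : Ω.IsHermitian) : (rankOneDowndate Ω v).IsHermitian := by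
  rw [rankOneDowndate, hΩ.vecMul_eq_mulVec]
  have hvv : (vecMulVec (Ω *ᵥ v) (Ω *ᵥ v)).IsHermitian := by
    simp [IsHermitian, conjTranspose_eq_transpose_of_trivial]
  exact hΩ.sub (hvv.smul (IsSelfAdjoint.all _))

lemma posSemidef_rankOneDowndate (hΩ : Ω.PosSemidef) (hs : v ⬝ᵥ Ω *ᵥ v ≠ 0) :
    (rankOneDowndate Ω v).PosSemidef :=
  .of_dotProduct_mulVec_nonneg (isHermitian_rankOneDowndate hΩ.isHermitian) fun x => by
    simpa [dotProduct_rankOneDowndate_mulVec_self hs] using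
      hΩ.dotProduct_mulVec_nonneg (orthResidual Ω v x)

lemma dotProduct_rankOneDowndate_mulVec_self_le (hΩ : Ω.PosSemidef) (x : n → ℝ) :
    x ⬝ᵥ rankOneDowndate Ω v *ᵥ x ≤ x ⬝ᵥ Ω *ᵥ x := by
  have hs : 0 ≤ v ⬝ᵥ Ω *ᵥ v := by simpa using hΩ.dotProduct_mulVec_nonneg v
  rw [rankOneDowndate, hΩ.isHermitian.vecMul_eq_mulVec, sub_mulVec, smul_mulVec,
    vecMulVec_mulVec, op_smul_eq_smul, dotProduct_sub, dotProduct_smul, dotProduct_smul,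
    smul_eq_mul, smul_eq_mul, dotProduct_comm x (Ω *ᵥ v), sub_le_self_iff]
  exact mul_nonneg (inv_nonneg.2 hs) (mul_self_nonneg _)

lemma dotProduct_self_le_orthResidual {x : n → ℝ} (hvx : v ⬝ᵥ x = 0) :
    x ⬝ᵥ x ≤ orthResidual Ω v x ⬝ᵥ orthResidual Ω v x := by
  set t := (v ⬝ᵥ Ω *ᵥ x) / (v ⬝ᵥ Ω *ᵥ v)
  have hvv : 0 ≤ v ⬝ᵥ v := by simpa using dotProduct_star_self_nonneg v
  have : orthResidual Ω v x ⬝ᵥ orthResidual Ω v x = x ⬝ᵥ x + t * t * (v ⬝ᵥ v) := by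
    simp only [orthResidual, sub_dotProduct, dotProduct_sub, smul_dotProduct, dotProduct_smul,
      dotProduct_comm x v, hvx, smul_eq_mul]
    ring
  rw [this]
  exact le_add_of_nonneg_right (mul_nonneg (mul_self_nonneg t) hvv)

variable [DecidableEq n]

lemma le_eigenvalue_of_rankOneDowndate_mulVec_eq_smul (hΩ : Ω.PosSemidef)
    (hs : v ⬝ᵥ Ω *ᵥ v ≠ 0) {c : ℝ} (hc₀ : 0 ≤ c) (hc : ∀ i, c ≤ hΩ.isHermitian.eigenvalues i)
    {μ : ℝ} {x : n → ℝ} (hx : x ≠ 0) (hμ : μ ≠ 0) (h : rankOneDowndate Ω v *ᵥ x = μ • x) :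
    c ≤ μ := by
  have hvx : v ⬝ᵥ x = 0 := by
    have := dotProduct_rankOneDowndate_mulVec hs x
    rw [h, dotProduct_smul, smul_eq_mul] at this
    exact (mul_eq_zero.1 this).resolve_left hμ
  have hxx : 0 < x ⬝ᵥ x := by simpa using dotProduct_star_self_pos_iff.2 hx
  refine le_of_mul_le_mul_right ?_ hxx
  calc c * (x ⬝ᵥ x) ≤ c * (orthResidual Ω v x ⬝ᵥ orthResidual Ω v x) :=
        mul_le_mul_of_nonneg_left (dotProduct_self_le_orthResidual hvx) hc₀
    _ ≤ orthResidual Ω v x ⬝ᵥ Ω *ᵥ orthResidual Ω v x :=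
        hΩ.isHermitian.mul_dotProduct_self_le hc _
    _ = μ * (x ⬝ᵥ x) := by
        rw [← dotProduct_rankOneDowndate_mulVec_self hs, h, dotProduct_smul, smul_eq_mul]

lemma eigenvalue_le_of_rankOneDowndate_mulVec_eq_smul (hΩ : Ω.PosSemidef) {c : ℝ}
    (hc : ∀ i, hΩ.isHermitian.eigenvalues i ≤ c) {μ : ℝ} {x : n → ℝ} (hx : x ≠ 0)
    (h : rankOneDowndate Ω v *ᵥ x = μ • x) : μ ≤ c := by
  have hxx : 0 < x ⬝ᵥ x := by simpa using dotProduct_star_self_pos_iff.2 hx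
  refine le_of_mul_le_mul_right ?_ hxx
  calc μ * (x ⬝ᵥ x) = x ⬝ᵥ rankOneDowndate Ω v *ᵥ x := by
        rw [h, dotProduct_smul, smul_eq_mul]
    _ ≤ x ⬝ᵥ Ω *ᵥ x := dotProduct_rankOneDowndate_mulVec_self_le hΩ x
    _ ≤ c * (x ⬝ᵥ x) := hΩ.isHermitian.dotProduct_mulVec_le hc x

end Matrix

/-- `Ω_c` is positive semidefinite, and every nonzero eigenvalue of `Ω_c`
lies between the extreme eigenvalues of `Ω₀`. -/
theorem omegaC_posSemidef_and_eigenvalue_bounds (p : ℕ) (hp : 2 ≤ p)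
    (Ω₀ : Matrix (Fin p) (Fin p) ℝ) (hΩ₀ : Ω₀.PosDef) :
    (OmegaC Ω₀).PosSemidef ∧
    ∀ (μ : ℝ) (x : Fin p → ℝ), x ≠ 0 → μ ≠ 0 → (OmegaC Ω₀).mulVec x = μ • x →
      lamMin hΩ₀.isHermitian ≤ μ ∧ μ ≤ lamMax hΩ₀.isHermitian := by
  have hΩc : OmegaC Ω₀ = rankOneDowndate Ω₀ (onesV p) := rfl
  have hones : onesV p ≠ 0 := Function.ne_iff.2 ⟨⟨0, by omega⟩, one_ne_zero⟩
  have hs : onesV p ⬝ᵥ Ω₀ *ᵥ onesV p ≠ 0 := by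
    simpa using (hΩ₀.dotProduct_mulVec_pos hones).ne'
  rw [hΩc]
  refine ⟨posSemidef_rankOneDowndate hΩ₀.posSemidef hs, fun μ x hx hμ h => ⟨?_, ?_⟩⟩
  · exact le_eigenvalue_of_rankOneDowndate_mulVec_eq_smul hΩ₀.posSemidef hs
      (Real.iInf_nonneg fun i => (hΩ₀.eigenvalues_pos i).le)
      (fun i => ciInf_le (Finite.bddBelow_range _) i) hx hμ h
  · exact eigenvalue_le_of_rankOneDowndate_mulVec_eq_smul hΩ₀.posSemidef
      (fun i => le_ciSup (Finite.bddAbove_range _) i) hx h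

end
end

section
/- Suppose R > 1, the eigenvalues of Ω₀ all lie in the interval [1/R, R], and ‖Ω₀‖_{L1} ≤ M_p. Then the compositional precision matrix satisfies ‖Ω_c‖_{L1} ≤ (1 + R²) M_p, and every nonzero eigenvalue μ of Ω_c (i.e., μ ≠ 0 with Ω_c x = μ x for some x ≠ 0) satisfies 1/R ≤ μ ≤ R. -/
open Matrix

noncomputable section

/-
Write `v = Ω₀ 1` and `s = 1ᵀ Ω₀ 1`, so that `Ω_c = Ω₀ − s⁻¹ v vᵀ`. For every `x`,
`xᵀ Ω_c x = yᵀ Ω₀ y` with `y = x − (vᵀx / s) 1`, the `Ω₀`-orthogonal projection of `x` away from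
`1`. Since `1ᵀ Ω_c = 0`, an eigenvector of `Ω_c` with nonzero eigenvalue is orthogonal to `1`,
hence `‖y‖ ≥ ‖x‖`, and the Rayleigh bounds `1/R ≤ zᵀΩ₀z / ‖z‖² ≤ R` pass to `Ω_c`.
The same identity gives Cauchy–Schwarz for the form of `Ω₀`, whence `‖v‖² ≤ R s ≤ R² p`;
together with `s ≥ p / R`, the rank-one correction adds at most `R² ‖Ω₀‖_{L1}` to each column sum.
-/

open scoped MatrixOrder

namespace Matrix

variable {n : Type*} [Fintype n]

section Rayleigh

variable [DecidableEq n] {A : Matrix n n ℝ} (hA : A.IsHermitian)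

theorem IsHermitian.mul_dotProduct_self_le_dotProduct_mulVec {a : ℝ}
    (h : ∀ i, a ≤ hA.eigenvalues i) (z : n → ℝ) : a * (z ⬝ᵥ z) ≤ z ⬝ᵥ A *ᵥ z := by
  have hle : algebraMap ℝ _ a ≤ A := by
    rw [algebraMap_le_iff_le_spectrum hA, hA.spectrum_real_eq_range_eigenvalues]
    rintro _ ⟨i, rfl⟩
    exact h i
  simpa [Algebra.algebraMap_eq_smul_one, sub_mulVec, smul_mulVec, dotProduct_sub]
    using (le_iff.mp hle).dotProduct_mulVec_nonneg z

theorem IsHermitian.dotProduct_mulVec_le_mul_dotProduct_self {b : ℝ}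
    (h : ∀ i, hA.eigenvalues i ≤ b) (z : n → ℝ) : z ⬝ᵥ A *ᵥ z ≤ b * (z ⬝ᵥ z) := by
  have hle : A ≤ algebraMap ℝ _ b := by
    rw [le_algebraMap_iff_spectrum_le hA, hA.spectrum_real_eq_range_eigenvalues]
    rintro _ ⟨i, rfl⟩
    exact h i
  simpa [Algebra.algebraMap_eq_smul_one, sub_mulVec, smul_mulVec, dotProduct_sub]
    using (le_iff.mp hle).dotProduct_mulVec_nonneg z

end Rayleigh

def deflation (Ω : Matrix n n ℝ) (u : n → ℝ) : Matrix n n ℝ :=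
  Ω - (u ⬝ᵥ Ω *ᵥ u)⁻¹ • vecMulVec (Ω *ᵥ u) (u ᵥ* Ω)

variable {Ω : Matrix n n ℝ} {u : n → ℝ}

theorem IsSymm.vecMul_eq_mulVec (hΩ : Ω.IsSymm) (u : n → ℝ) :
    u ᵥ* Ω = Ω *ᵥ u := by
  rw [← mulVec_transpose, hΩ.eq]

theorem IsSymm.dotProduct_mulVec_comm (hΩ : Ω.IsSymm) (x y : n → ℝ) :
    x ⬝ᵥ Ω *ᵥ y = y ⬝ᵥ Ω *ᵥ x := by
  rw [dotProduct_mulVec, hΩ.vecMul_eq_mulVec, dotProduct_comm]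

theorem deflation_mulVec (x : n → ℝ) :
    deflation Ω u *ᵥ x = Ω *ᵥ x - ((u ⬝ᵥ Ω *ᵥ u)⁻¹ * (u ⬝ᵥ Ω *ᵥ x)) • Ω *ᵥ u := by
  rw [deflation, sub_mulVec, smul_mulVec, vecMulVec_mulVec, op_smul_eq_smul, smul_smul,
    ← dotProduct_mulVec]

theorem dotProduct_deflation_mulVec_eq_zero (hs : u ⬝ᵥ Ω *ᵥ u ≠ 0) (x : n → ℝ) :
    u ⬝ᵥ deflation Ω u *ᵥ x = 0 := by
  rw [deflation_mulVec, dotProduct_sub, dotProduct_smul, smul_eq_mul, mul_assoc,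
    mul_comm (u ⬝ᵥ Ω *ᵥ x), inv_mul_cancel_left₀ hs, sub_self]

theorem IsSymm.dotProduct_deflation_mulVec (hΩ : Ω.IsSymm) (x : n → ℝ) :
    x ⬝ᵥ deflation Ω u *ᵥ x = x ⬝ᵥ Ω *ᵥ x - (u ⬝ᵥ Ω *ᵥ u)⁻¹ * (u ⬝ᵥ Ω *ᵥ x) ^ 2 := by
  rw [deflation_mulVec, dotProduct_sub, dotProduct_smul, smul_eq_mul, hΩ.dotProduct_mulVec_comm x u]
  ring

theorem IsSymm.dotProduct_deflation_mulVec_eq_sub_smul (hΩ : Ω.IsSymm) (hs : u ⬝ᵥ Ω *ᵥ u ≠ 0)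
    (x : n → ℝ) :
    x ⬝ᵥ deflation Ω u *ᵥ x = (x - ((u ⬝ᵥ Ω *ᵥ u)⁻¹ * (u ⬝ᵥ Ω *ᵥ x)) • u) ⬝ᵥ
      Ω *ᵥ (x - ((u ⬝ᵥ Ω *ᵥ u)⁻¹ * (u ⬝ᵥ Ω *ᵥ x)) • u) := by
  rw [hΩ.dotProduct_deflation_mulVec]
  simp only [mulVec_sub, mulVec_smul, dotProduct_sub, sub_dotProduct, dotProduct_smul,
    smul_dotProduct, smul_eq_mul, hΩ.dotProduct_mulVec_comm x u]
  field_simp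
  ring

theorem PosSemidef.sq_dotProduct_mulVec_le (hΩ : Ω.PosSemidef) (hs : 0 < u ⬝ᵥ Ω *ᵥ u)
    (x : n → ℝ) : (u ⬝ᵥ Ω *ᵥ x) ^ 2 ≤ (u ⬝ᵥ Ω *ᵥ u) * (x ⬝ᵥ Ω *ᵥ x) := by
  have hsymm : Ω.IsSymm := isHermitian_iff_isSymm.mp hΩ.isHermitian
  have hnonneg := hΩ.dotProduct_mulVec_nonneg
    (x - ((u ⬝ᵥ Ω *ᵥ u)⁻¹ * (u ⬝ᵥ Ω *ᵥ x)) • u)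
  rw [star_trivial, ← hsymm.dotProduct_deflation_mulVec_eq_sub_smul hs.ne',
    hsymm.dotProduct_deflation_mulVec, sub_nonneg, inv_mul_le_iff₀ hs] at hnonneg
  exact hnonneg

variable [DecidableEq n]

theorem IsHermitian.eigenvalue_deflation_mem_Icc (hΩ : Ω.IsHermitian) {a b : ℝ} (ha : 0 ≤ a)
    (hlo : ∀ i, a ≤ hΩ.eigenvalues i) (hhi : ∀ i, hΩ.eigenvalues i ≤ b)
    (hs : 0 < u ⬝ᵥ Ω *ᵥ u) {μ : ℝ} {x : n → ℝ} (hx : x ≠ 0) (hμ : μ ≠ 0)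
    (hDx : deflation Ω u *ᵥ x = μ • x) : μ ∈ Set.Icc a b := by
  have hsymm : Ω.IsSymm := isHermitian_iff_isSymm.mp hΩ
  have hxx : 0 < x ⬝ᵥ x := by simpa using dotProduct_star_self_pos_iff.mpr hx
  have hux : u ⬝ᵥ x = 0 := by
    have h := dotProduct_deflation_mulVec_eq_zero hs.ne' x
    rwa [hDx, dotProduct_smul, smul_eq_mul, mul_eq_zero, or_iff_right hμ] at h
  have hμx : μ * (x ⬝ᵥ x) = x ⬝ᵥ deflation Ω u *ᵥ x := by
    rw [hDx, dotProduct_smul, smul_eq_mul]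
  refine ⟨le_of_mul_le_mul_right ?_ hxx, le_of_mul_le_mul_right ?_ hxx⟩
  · set t := (u ⬝ᵥ Ω *ᵥ u)⁻¹ * (u ⬝ᵥ Ω *ᵥ x)
    have hshift : x ⬝ᵥ x ≤ (x - t • u) ⬝ᵥ (x - t • u) := by
      simp only [dotProduct_sub, sub_dotProduct, dotProduct_smul, smul_dotProduct, smul_eq_mul,
        hux, dotProduct_comm x u]
      have huu : 0 ≤ u ⬝ᵥ u := by simpa using dotProduct_star_self_nonneg u
      nlinarith [mul_nonneg (mul_self_nonneg t) huu]
    calc a * (x ⬝ᵥ x) ≤ a * ((x - t • u) ⬝ᵥ (x - t • u)) := mul_le_mul_of_nonneg_left hshift ha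
      _ ≤ x ⬝ᵥ deflation Ω u *ᵥ x := by
        rw [hsymm.dotProduct_deflation_mulVec_eq_sub_smul hs.ne']
        exact hΩ.mul_dotProduct_self_le_dotProduct_mulVec hlo _
      _ = μ * (x ⬝ᵥ x) := hμx.symm
  · calc μ * (x ⬝ᵥ x) = x ⬝ᵥ Ω *ᵥ x - (u ⬝ᵥ Ω *ᵥ u)⁻¹ * (u ⬝ᵥ Ω *ᵥ x) ^ 2 := by
          rw [hμx, hsymm.dotProduct_deflation_mulVec]
      _ ≤ x ⬝ᵥ Ω *ᵥ x := sub_le_self _ (by positivity)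
      _ ≤ b * (x ⬝ᵥ x) := hΩ.dotProduct_mulVec_le_mul_dotProduct_self hhi x

theorem PosSemidef.mulVec_dotProduct_mulVec_le (hΩ : Ω.PosSemidef) {b : ℝ}
    (hhi : ∀ i, hΩ.isHermitian.eigenvalues i ≤ b) {z : n → ℝ} (hz : 0 < z ⬝ᵥ Ω *ᵥ z) :
    Ω *ᵥ z ⬝ᵥ Ω *ᵥ z ≤ b * (z ⬝ᵥ Ω *ᵥ z) := by
  have hsymm : Ω.IsSymm := isHermitian_iff_isSymm.mp hΩ.isHermitian
  have hN : 0 ≤ Ω *ᵥ z ⬝ᵥ Ω *ᵥ z := by simpa using dotProduct_star_self_nonneg (Ω *ᵥ z)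
  have hb : 0 < b := by
    have hzz : 0 ≤ z ⬝ᵥ z := by simpa using dotProduct_star_self_nonneg z
    have := hz.trans_le (hΩ.isHermitian.dotProduct_mulVec_le_mul_dotProduct_self hhi z)
    exact pos_of_mul_pos_left this hzz
  have key : (Ω *ᵥ z ⬝ᵥ Ω *ᵥ z) * (Ω *ᵥ z ⬝ᵥ Ω *ᵥ z) ≤
      (b * (z ⬝ᵥ Ω *ᵥ z)) * (Ω *ᵥ z ⬝ᵥ Ω *ᵥ z) := by
    calc (Ω *ᵥ z ⬝ᵥ Ω *ᵥ z) * (Ω *ᵥ z ⬝ᵥ Ω *ᵥ z) = (z ⬝ᵥ Ω *ᵥ (Ω *ᵥ z)) ^ 2 := by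
          rw [dotProduct_mulVec z, hsymm.vecMul_eq_mulVec, sq]
      _ ≤ (z ⬝ᵥ Ω *ᵥ z) * (Ω *ᵥ z ⬝ᵥ Ω *ᵥ (Ω *ᵥ z)) := hΩ.sq_dotProduct_mulVec_le hz _
      _ ≤ (z ⬝ᵥ Ω *ᵥ z) * (b * (Ω *ᵥ z ⬝ᵥ Ω *ᵥ z)) := by
          gcongr
          exact hΩ.isHermitian.dotProduct_mulVec_le_mul_dotProduct_self hhi _
      _ = (b * (z ⬝ᵥ Ω *ᵥ z)) * (Ω *ᵥ z ⬝ᵥ Ω *ᵥ z) := by ring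
  rcases hN.eq_or_lt with hN0 | hNpos
  · rw [← hN0]
    positivity
  · exact le_of_mul_le_mul_right key hNpos

theorem PosSemidef.sum_abs_mulVec_one_le (hΩ : Ω.PosSemidef) {b : ℝ}
    (hhi : ∀ i, hΩ.isHermitian.eigenvalues i ≤ b) (hs : 0 < (1 : n → ℝ) ⬝ᵥ Ω *ᵥ 1) :
    ∑ i, |(Ω *ᵥ 1) i| ≤ b * Fintype.card n := by
  have hs_hi : (1 : n → ℝ) ⬝ᵥ Ω *ᵥ 1 ≤ b * Fintype.card n := by
    simpa [one_dotProduct_one] using hΩ.isHermitian.dotProduct_mulVec_le_mul_dotProduct_self hhi 1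
  have hb : 0 < b * Fintype.card n := hs.trans_le hs_hi
  have hsq : (∑ i, |(Ω *ᵥ 1) i|) ^ 2 ≤ Fintype.card n * (Ω *ᵥ 1 ⬝ᵥ Ω *ᵥ 1) := by
    simpa [dotProduct, sq_abs, sq] using
      sq_sum_le_card_mul_sum_sq (s := Finset.univ) (f := fun i => |(Ω *ᵥ 1) i|)
  rw [← sq_le_sq₀ (by positivity) hb.le]
  calc (∑ i, |(Ω *ᵥ 1) i|) ^ 2 ≤ Fintype.card n * (b * ((1 : n → ℝ) ⬝ᵥ Ω *ᵥ 1)) :=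
        hsq.trans (by gcongr; exact hΩ.mulVec_dotProduct_mulVec_le hhi hs)
    _ ≤ Fintype.card n * (b * (b * Fintype.card n)) := by
        have : 0 < b := pos_of_mul_pos_left hb (Nat.cast_nonneg _)
        gcongr
    _ = (b * Fintype.card n) ^ 2 := by ring

theorem PosDef.sum_abs_deflation_one_le [Nonempty n] (hΩ : Ω.PosDef) {a b : ℝ} (ha : 0 < a)
    (hlo : ∀ i, a ≤ hΩ.isHermitian.eigenvalues i) (hhi : ∀ i, hΩ.isHermitian.eigenvalues i ≤ b)
    (j : n) : ∑ i, |deflation Ω 1 i j| ≤ (1 + b / a) * ∑ i, |Ω i j| := by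
  set s := (1 : n → ℝ) ⬝ᵥ Ω *ᵥ 1
  set v := Ω *ᵥ 1
  have hcard : (0 : ℝ) < Fintype.card n := by exact_mod_cast Fintype.card_pos
  have hs_lo : a * Fintype.card n ≤ s := by
    simpa [one_dotProduct_one] using hΩ.isHermitian.mul_dotProduct_self_le_dotProduct_mulVec hlo 1
  have hs : 0 < s := (mul_pos ha hcard).trans_le hs_lo
  have hb : 0 < b := ha.trans_le ((hlo j).trans (hhi j))
  have hv : ∑ i, |v i| ≤ b * Fintype.card n := hΩ.posSemidef.sum_abs_mulVec_one_le hhi hs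
  have hsv : s⁻¹ * ∑ i, |v i| ≤ b / a :=
    calc s⁻¹ * ∑ i, |v i| ≤ (a * Fintype.card n)⁻¹ * (b * Fintype.card n) := by
          gcongr
      _ = b / a := by field_simp
  have hentry : ∀ i, deflation Ω 1 i j = Ω i j - s⁻¹ * (v i * ∑ k, Ω k j) := by
    intro i
    simp only [deflation, sub_apply, smul_apply, vecMulVec_apply, vecMul, dotProduct,
      Pi.one_apply, one_mul, smul_eq_mul, s, v]
  calc ∑ i, |deflation Ω 1 i j| ≤ ∑ i, (|Ω i j| + s⁻¹ * |v i| * |∑ k, Ω k j|) := by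
        gcongr with i
        rw [hentry]
        refine (abs_sub _ _).trans_eq ?_
        rw [abs_mul, abs_mul, abs_of_pos (inv_pos.2 hs), mul_assoc]
    _ = ∑ i, |Ω i j| + (s⁻¹ * ∑ i, |v i|) * |∑ k, Ω k j| := by
        rw [Finset.sum_add_distrib, ← Finset.sum_mul, ← Finset.mul_sum]
    _ ≤ ∑ i, |Ω i j| + b / a * ∑ i, |Ω i j| := by
        gcongr
        exact Finset.abs_sum_le_sum_abs _ _
    _ = (1 + b / a) * ∑ i, |Ω i j| := by ring

end Matrix

theorem omegaC_eq_deflation {p : ℕ} (Ω : Matrix (Fin p) (Fin p) ℝ) : OmegaC Ω = deflation Ω 1 :=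
  rfl

theorem l1Norm_deflation_one_le {p : ℕ} [NeZero p] {Ω : Matrix (Fin p) (Fin p) ℝ}
    (hΩ : Ω.PosDef) {a b : ℝ} (ha : 0 < a) (hlo : ∀ i, a ≤ hΩ.isHermitian.eigenvalues i)
    (hhi : ∀ i, hΩ.isHermitian.eigenvalues i ≤ b) :
    l1Norm (deflation Ω 1) ≤ (1 + b / a) * l1Norm Ω := by
  have hb : 0 < b := ha.trans_le ((hlo 0).trans (hhi 0))
  refine ciSup_le fun j => (hΩ.sum_abs_deflation_one_le ha hlo hhi j).trans ?_
  exact mul_le_mul_of_nonneg_left (Finite.le_ciSup_of_le j le_rfl) (by positivity)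

theorem omegaC_l1_and_eigenvalue_bounds_general (p : ℕ) (hp : 2 ≤ p)
    (Ω₀ : Matrix (Fin p) (Fin p) ℝ) (hΩ₀ : Ω₀.PosDef) (R M : ℝ) (hR : 1 < R)
    (heig : ∀ i, hΩ₀.isHermitian.eigenvalues i ∈ Set.Icc R⁻¹ R)
    (hL1 : l1Norm Ω₀ ≤ M) :
    l1Norm (OmegaC Ω₀) ≤ (1 + R ^ 2) * M ∧
    ∀ (μ : ℝ) (x : Fin p → ℝ), x ≠ 0 → μ ≠ 0 → (OmegaC Ω₀).mulVec x = μ • x →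
      1 / R ≤ μ ∧ μ ≤ R := by
  have : NeZero p := ⟨by omega⟩
  have hR₀ : 0 < R := zero_lt_one.trans hR
  have hlo : ∀ i, R⁻¹ ≤ hΩ₀.isHermitian.eigenvalues i := fun i => (heig i).1
  have hhi : ∀ i, hΩ₀.isHermitian.eigenvalues i ≤ R := fun i => (heig i).2
  rw [omegaC_eq_deflation]
  refine ⟨?_, fun μ x hx hμ hΩx => ?_⟩
  · calc l1Norm (deflation Ω₀ 1) ≤ (1 + R / R⁻¹) * l1Norm Ω₀ :=
          l1Norm_deflation_one_le hΩ₀ (inv_pos.2 hR₀) hlo hhi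
      _ ≤ (1 + R ^ 2) * M := by
          rw [div_inv_eq_mul, ← sq]
          gcongr
  · have hs : 0 < (1 : Fin p → ℝ) ⬝ᵥ Ω₀ *ᵥ 1 := by
      simpa using hΩ₀.dotProduct_mulVec_pos one_ne_zero
    obtain ⟨hμlo, hμhi⟩ := hΩ₀.isHermitian.eigenvalue_deflation_mem_Icc (inv_nonneg.2 hR₀.le)
      hlo hhi hs hx hμ hΩx
    exact ⟨by rwa [one_div], hμhi⟩

/-- if the eigenvalues of `Ω₀` lie in `[1/R, R]` and `‖Ω₀‖_{L1} ≤ M_p`,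
then `‖Ω_c‖_{L1} ≤ (1 + R²) M_p` and every nonzero eigenvalue of `Ω_c` lies in `[1/R, R]`. -/
theorem omegaC_l1_and_eigenvalue_bounds (p : ℕ) (hp : 2 ≤ p)
    (Ω₀ : Matrix (Fin p) (Fin p) ℝ) (hΩ₀ : Ω₀.PosDef) (R M : ℝ) (hR : 1 < R) (hM : 0 < M)
    (heig : ∀ i, hΩ₀.isHermitian.eigenvalues i ∈ Set.Icc R⁻¹ R)
    (hL1 : l1Norm Ω₀ ≤ M) :
    l1Norm (OmegaC Ω₀) ≤ (1 + R ^ 2) * M ∧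
    ∀ (μ : ℝ) (x : Fin p → ℝ), x ≠ 0 → μ ≠ 0 → (OmegaC Ω₀).mulVec x = μ • x →
      1 / R ≤ μ ∧ μ ≤ R :=
  omegaC_l1_and_eigenvalue_bounds_general p hp Ω₀ hΩ₀ R M hR heig hL1
end
end

section
/- Suppose R > 1 and the eigenvalue condition number of Ω₀ satisfies λ_max(Ω₀)/λ_min(Ω₀) ≤ R. Then the entrywise identification error satisfies ‖Ω₀ − Ω_c‖_max ≤ R ‖Ω₀‖_{L1} / √p. -/
open Matrix

noncomputable section

/-!
With `s = 1ᵀ Ω₀ 1`, the error `Ω₀ − Ω_c = s⁻¹ (Ω₀ 1)(1ᵀ Ω₀)` is a rank-one matrix whose factors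
have entries bounded by `‖Ω₀‖_{L1}` (by symmetry for `Ω₀ 1`), so `‖Ω₀ − Ω_c‖_max ≤ ‖Ω₀‖_{L1}² / s`.
The Rayleigh bound gives `s ≥ p λ_min`, and Cauchy–Schwarz on a column together with
`Ω₀² ≤ λ_max² I` gives `‖Ω₀‖_{L1} ≤ √p λ_max`; hence
`‖Ω₀‖_{L1}² / s ≤ (‖Ω₀‖_{L1} / √p) (λ_max / λ_min)`.
-/

open scoped MatrixOrder

namespace Matrix.IsHermitian

variable {p : ℕ} {A : Matrix (Fin p) (Fin p) ℝ}

theorem lamMin_le_eigenvalues (hA : A.IsHermitian) (i : Fin p) :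
    lamMin hA ≤ hA.eigenvalues i :=
  ciInf_le (Set.finite_range _).bddBelow i

theorem eigenvalues_le_lamMax (hA : A.IsHermitian) (i : Fin p) :
    hA.eigenvalues i ≤ lamMax hA :=
  le_ciSup (Set.finite_range _).bddAbove i

theorem algebraMap_lamMin_le (hA : A.IsHermitian) : algebraMap ℝ _ (lamMin hA) ≤ A := by
  refine algebraMap_le_of_le_spectrum ?_ hA.isSelfAdjoint
  rw [hA.spectrum_real_eq_range_eigenvalues]
  rintro _ ⟨i, rfl⟩
  exact hA.lamMin_le_eigenvalues i

theorem lamMin_mul_dotProduct_self_le (hA : A.IsHermitian) (x : Fin p → ℝ) :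
    lamMin hA * (x ⬝ᵥ x) ≤ x ⬝ᵥ A *ᵥ x := by
  have := (Matrix.le_iff.mp hA.algebraMap_lamMin_le).dotProduct_mulVec_nonneg x
  simpa [sub_mulVec, Algebra.algebraMap_eq_smul_one, smul_mulVec, dotProduct_sub] using this

theorem mulVec_onesV (hA : A.IsHermitian) : A *ᵥ onesV p = onesV p ᵥ* A := by
  rw [← mulVec_transpose, ← conjTranspose_eq_transpose_of_trivial, hA.eq]

end Matrix.IsHermitian

namespace Matrix.PosSemidef

variable {p : ℕ} {A : Matrix (Fin p) (Fin p) ℝ}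

theorem lamMax_nonneg (hA : A.PosSemidef) : 0 ≤ lamMax hA.isHermitian :=
  Real.iSup_nonneg hA.eigenvalues_nonneg

theorem sq_le_algebraMap_lamMax_sq (hA : A.PosSemidef) :
    A ^ 2 ≤ algebraMap ℝ _ (lamMax hA.isHermitian ^ 2) := by
  rw [← cfc_pow_id (R := ℝ) A 2 hA.isHermitian.isSelfAdjoint]
  refine cfc_le_algebraMap _ _ A (fun x hx => ?_) (by fun_prop) hA.isHermitian.isSelfAdjoint
  rw [hA.isHermitian.spectrum_real_eq_range_eigenvalues] at hx
  obtain ⟨i, rfl⟩ := hx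
  exact pow_le_pow_left₀ (hA.eigenvalues_nonneg i) (hA.isHermitian.eigenvalues_le_lamMax i) 2

theorem sum_sq_apply_le_lamMax_sq (hA : A.PosSemidef) (j : Fin p) :
    ∑ i, A i j ^ 2 ≤ lamMax hA.isHermitian ^ 2 := by
  have := (Matrix.le_iff.mp hA.sq_le_algebraMap_lamMax_sq).diag_nonneg (i := j)
  have hsymm (i : Fin p) : A j i = A i j := by simpa using hA.isHermitian.apply i j
  simpa [sq, mul_apply, Algebra.algebraMap_eq_smul_one, hsymm] using this

theorem sum_abs_apply_le_sqrt_mul_lamMax (hA : A.PosSemidef) (j : Fin p) :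
    ∑ i, |A i j| ≤ √p * lamMax hA.isHermitian := by
  refine le_of_sq_le_sq ?_ (mul_nonneg (Real.sqrt_nonneg _) hA.lamMax_nonneg)
  calc (∑ i, |A i j|) ^ 2 ≤ p * ∑ i, |A i j| ^ 2 := by
        simpa using sq_sum_le_card_mul_sum_sq (s := Finset.univ) (f := fun i => |A i j|)
    _ ≤ p * lamMax hA.isHermitian ^ 2 := by
        simp only [sq_abs]
        gcongr
        exact hA.sum_sq_apply_le_lamMax_sq j
    _ = (√p * lamMax hA.isHermitian) ^ 2 := by
        rw [mul_pow, Real.sq_sqrt (Nat.cast_nonneg p)]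

theorem l1Norm_le_sqrt_mul_lamMax (hA : A.PosSemidef) :
    l1Norm A ≤ √p * lamMax hA.isHermitian :=
  Real.iSup_le hA.sum_abs_apply_le_sqrt_mul_lamMax
    (mul_nonneg (Real.sqrt_nonneg _) hA.lamMax_nonneg)

end Matrix.PosSemidef

theorem Matrix.PosDef.lamMin_pos {p : ℕ} [NeZero p] {A : Matrix (Fin p) (Fin p) ℝ}
    (hA : A.PosDef) : 0 < lamMin hA.isHermitian := by
  obtain ⟨i, hi⟩ := exists_eq_ciInf_of_finite (f := hA.isHermitian.eigenvalues)
  rw [lamMin, ← hi]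
  exact hA.eigenvalues_pos i

section

variable {p : ℕ}

theorem dotProduct_onesV_self : onesV p ⬝ᵥ onesV p = p := by
  simp [onesV, dotProduct]

theorem sum_abs_apply_le_l1Norm (A : Matrix (Fin p) (Fin p) ℝ) (j : Fin p) :
    ∑ i, |A i j| ≤ l1Norm A :=
  le_ciSup (f := fun j => ∑ i, |A i j|) (Set.finite_range _).bddAbove j

theorem l1Norm_nonneg (A : Matrix (Fin p) (Fin p) ℝ) : 0 ≤ l1Norm A :=
  Real.iSup_nonneg fun _ => Finset.sum_nonneg fun _ _ => abs_nonneg _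

theorem abs_vecMul_onesV_le_l1Norm (A : Matrix (Fin p) (Fin p) ℝ) (j : Fin p) :
    |(onesV p ᵥ* A) j| ≤ l1Norm A := by
  simpa [vecMul, dotProduct, onesV] using
    (Finset.abs_sum_le_sum_abs _ _).trans (sum_abs_apply_le_l1Norm A j)

theorem maxNorm_le {A : Matrix (Fin p) (Fin p) ℝ} {c : ℝ} (hc : 0 ≤ c)
    (h : ∀ i j, |A i j| ≤ c) : maxNorm A ≤ c :=
  Real.iSup_le (fun i => Real.iSup_le (h i) hc) hc

theorem sub_OmegaC (Ω : Matrix (Fin p) (Fin p) ℝ) :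
    Ω - OmegaC Ω = (onesV p ⬝ᵥ Ω *ᵥ onesV p)⁻¹ • vecMulVec (Ω *ᵥ onesV p) (onesV p ᵥ* Ω) :=
  sub_sub_cancel _ _

theorem Matrix.PosSemidef.maxNorm_sub_OmegaC_le {Ω : Matrix (Fin p) (Fin p) ℝ}
    (hΩ : Ω.PosSemidef) :
    maxNorm (Ω - OmegaC Ω) ≤ l1Norm Ω ^ 2 / (onesV p ⬝ᵥ Ω *ᵥ onesV p) := by
  have hs : 0 ≤ onesV p ⬝ᵥ Ω *ᵥ onesV p := by
    simpa using hΩ.dotProduct_mulVec_nonneg (onesV p)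
  have hrow (i : Fin p) : |(Ω *ᵥ onesV p) i| ≤ l1Norm Ω := by
    rw [hΩ.isHermitian.mulVec_onesV]
    exact abs_vecMul_onesV_le_l1Norm Ω i
  refine maxNorm_le (div_nonneg (sq_nonneg _) hs) fun i j => ?_
  rw [sub_OmegaC, smul_apply, vecMulVec_apply, smul_eq_mul, abs_mul, abs_mul, abs_inv,
    abs_of_nonneg hs, div_eq_inv_mul, sq]
  exact mul_le_mul_of_nonneg_left
    (mul_le_mul (hrow i) (abs_vecMul_onesV_le_l1Norm Ω j) (abs_nonneg _) (l1Norm_nonneg Ω))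
    (inv_nonneg.mpr hs)

end

theorem identification_error_condition_number_bound_general (p : ℕ) (hp : 2 ≤ p)
    (Ω₀ : Matrix (Fin p) (Fin p) ℝ) (hΩ₀ : Ω₀.PosDef) (R : ℝ)
    (hcond : lamMax hΩ₀.isHermitian / lamMin hΩ₀.isHermitian ≤ R) :
    maxNorm (Ω₀ - OmegaC Ω₀) ≤ R * l1Norm Ω₀ / Real.sqrt p := by
  have : NeZero p := ⟨by omega⟩
  set m := lamMin hΩ₀.isHermitian
  set M := lamMax hΩ₀.isHermitian
  set L := l1Norm Ω₀
  have hp0 : (0 : ℝ) < p := by positivity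
  have hm : 0 < m := hΩ₀.lamMin_pos
  have hL0 : 0 ≤ L := l1Norm_nonneg Ω₀
  have hL : L ≤ √p * M := hΩ₀.posSemidef.l1Norm_le_sqrt_mul_lamMax
  have hs : m * p ≤ onesV p ⬝ᵥ Ω₀ *ᵥ onesV p := by
    simpa [dotProduct_onesV_self] using hΩ₀.isHermitian.lamMin_mul_dotProduct_self_le (onesV p)
  calc maxNorm (Ω₀ - OmegaC Ω₀) ≤ L ^ 2 / (onesV p ⬝ᵥ Ω₀ *ᵥ onesV p) :=
        hΩ₀.posSemidef.maxNorm_sub_OmegaC_le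
    _ ≤ L * (√p * M) / (m * p) := by
        rw [sq]
        exact div_le_div₀ (mul_nonneg hL0 (hL0.trans hL)) (mul_le_mul_of_nonneg_left hL hL0)
          (by positivity) hs
    _ = L / √p * (M / m) := by
        field_simp
        rw [Real.sq_sqrt hp0.le]
        ring
    _ ≤ L / √p * R := by
        gcongr
    _ = R * L / √p := by ring

/-- if `λ_max(Ω₀)/λ_min(Ω₀) ≤ R`, then
`‖Ω₀ − Ω_c‖_max ≤ R ‖Ω₀‖_{L1}/√p`. -/
theorem identification_error_condition_number_bound (p : ℕ) (hp : 2 ≤ p)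
    (Ω₀ : Matrix (Fin p) (Fin p) ℝ) (hΩ₀ : Ω₀.PosDef) (R : ℝ) (hR : 1 < R)
    (hcond : lamMax hΩ₀.isHermitian / lamMin hΩ₀.isHermitian ≤ R) :
    maxNorm (Ω₀ - OmegaC Ω₀) ≤ R * l1Norm Ω₀ / Real.sqrt p :=
  identification_error_condition_number_bound_general p hp Ω₀ hΩ₀ R hcond

end
end
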